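/- Let t be a positive integer and let G be a graph on n vertices, with each edge coloured red or blue, such that the minimum degree of G is at least (2n−2t−1)/(t+1). Then there do not exist t+1 vertices u₁, …, u_{t+1} of G that lie pairwise in distinct red components and pairwise in distinct blue components; equivalently, among any t+1 vertices of G, some two lie in a common red component or in a common blue component. -/

import Mathlib

open SimpleGraph

/-- The spanning subgraph of `G` consisting of the edges of colour `i`,
    for an edge-colouring `c` of `G` with `r` colours. -/
def colSub {V : Type} (G : SimpleGraph V) {r : ℕ} (c : Sym2 V → Fin r) (i : Fin r) :
    SimpleGraph V where
  Adj u v := G.Adj u v ∧ c s(u, v) = i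
  symm := ⟨fun u v h => ⟨h.1.symm, by rw [Sym2.eq_swap]; exact h.2⟩⟩
  loopless := ⟨fun v h => G.irrefl h.1⟩

/-!
Suppose `u₁, …, u_{t+1}` lie in pairwise distinct red and pairwise distinct blue components.
Every neighbour of `uᵢ` shares its red or its blue component, and `uᵢ` lies in both, so the red
and blue components of `uᵢ` together have at least `deg uᵢ + 2` vertices. The red components of
the `uᵢ` are disjoint, and so are the blue ones, hence `∑ (deg uᵢ + 2) ≤ 2n`. This contradicts the
degree bound, which gives `∑ deg uᵢ ≥ 2n - 2t - 1`.
-/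

namespace SimpleGraph

variable {V : Type*}

theorem sum_ncard_supp_le_card [Fintype V] {ι : Type*} [Fintype ι] {H : SimpleGraph V}
    {g : ι → H.ConnectedComponent} (hg : Function.Injective g) :
    ∑ i, (g i).supp.ncard ≤ Fintype.card V := by
  classical
  have hdisj : (↑(Finset.univ : Finset ι) : Set ι).PairwiseDisjoint fun i => (g i).supp.toFinset :=
    fun i _ j _ hij =>
      Set.disjoint_toFinset.mpr (pairwise_disjoint_supp_connectedComponent H (hg.ne hij))
  simp only [Set.ncard_eq_toFinset_card']
  rw [← Finset.card_biUnion hdisj]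
  exact Finset.card_le_univ _

theorem degree_add_two_le_ncard_supp_add_ncard_supp [Fintype V] {G H₁ H₂ : SimpleGraph V}
    [DecidableRel G.Adj] (hG : G ≤ H₁ ⊔ H₂) (v : V) :
    G.degree v + 2 ≤
      (H₁.connectedComponentMk v).supp.ncard + (H₂.connectedComponentMk v).supp.ncard := by
  set S₁ := (H₁.connectedComponentMk v).supp
  set S₂ := (H₂.connectedComponentMk v).supp
  have hv₁ : v ∈ S₁ := rfl
  have hv₂ : v ∈ S₂ := rfl
  have hnbhd : insert v (G.neighborSet v) ⊆ S₁ ∪ S₂ := by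
    rintro w (rfl | hw)
    · exact Or.inl hv₁
    · rcases hG hw with h₁ | h₂
      · exact Or.inl (ConnectedComponent.sound h₁.reachable.symm)
      · exact Or.inr (ConnectedComponent.sound h₂.reachable.symm)
  have hcard : (insert v (G.neighborSet v)).ncard = G.degree v + 1 := by
    rw [Set.ncard_insert_of_notMem G.notMem_neighborSet_self, ← Nat.card_coe_set_eq,
      Nat.card_eq_fintype_card, card_neighborSet_eq_degree]
  have hinter : 1 ≤ (S₁ ∩ S₂).ncard :=
    (Set.ncard_pos).mpr ⟨v, hv₁, hv₂⟩
  have := Set.ncard_le_ncard hnbhd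
  have := Set.ncard_union_add_ncard_inter S₁ S₂
  omega

theorem sum_degree_add_two_mul_card_le [Fintype V] {ι : Type*} [Fintype ι]
    {G H₁ H₂ : SimpleGraph V} [DecidableRel G.Adj] (hG : G ≤ H₁ ⊔ H₂) {f : ι → V}
    (hf₁ : Function.Injective (H₁.connectedComponentMk ∘ f))
    (hf₂ : Function.Injective (H₂.connectedComponentMk ∘ f)) :
    ∑ i, G.degree (f i) + 2 * Fintype.card ι ≤ 2 * Fintype.card V :=
  calc ∑ i, G.degree (f i) + 2 * Fintype.card ι = ∑ i, (G.degree (f i) + 2) := by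
        rw [Finset.sum_add_distrib, Finset.sum_const, Finset.card_univ, smul_eq_mul, mul_comm]
    _ ≤ ∑ i, ((H₁.connectedComponentMk (f i)).supp.ncard +
          (H₂.connectedComponentMk (f i)).supp.ncard) :=
        Finset.sum_le_sum fun i _ => degree_add_two_le_ncard_supp_add_ncard_supp hG (f i)
    _ ≤ 2 * Fintype.card V := by
        rw [Finset.sum_add_distrib, two_mul]
        exact add_le_add (sum_ncard_supp_le_card hf₁) (sum_ncard_supp_le_card hf₂)

end SimpleGraph

theorem le_colSub_zero_sup_colSub_one {V : Type} (G : SimpleGraph V) (c : Sym2 V → Fin 2) :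
    G ≤ colSub G c 0 ⊔ colSub G c 1 := by
  intro u v huv
  rcases Fin.exists_fin_two.mp ⟨c s(u, v), rfl⟩ with hc | hc
  · exact Or.inl ⟨huv, hc⟩
  · exact Or.inr ⟨huv, hc⟩

theorem no_large_independent_component_system_general {V : Type} [Fintype V]
    (G : SimpleGraph V) [DecidableRel G.Adj] (c : Sym2 V → Fin 2)
    (t n : ℕ) (hn : Fintype.card V = n)
    (hdeg : ∀ v : V, (2 * (n : ℝ) - 2 * t - 1) / (t + 1) ≤ G.degree v) :
    ∀ f : Fin (t + 1) → V, ∃ i j : Fin (t + 1), i ≠ j ∧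
      ((colSub G c 0).connectedComponentMk (f i) =
          (colSub G c 0).connectedComponentMk (f j) ∨
        (colSub G c 1).connectedComponentMk (f i) =
          (colSub G c 1).connectedComponentMk (f j)) := by
  intro f
  by_contra! hdistinct
  have hupp : ∑ i, (G.degree (f i) : ℝ) + 2 * (t + 1) ≤ 2 * n := by
    have := sum_degree_add_two_mul_card_le (le_colSub_zero_sup_colSub_one G c) (f := f)
      (fun i j hij => by_contra fun hne => (hdistinct i j hne).1 hij)
      (fun i j hij => by_contra fun hne => (hdistinct i j hne).2 hij)
    rw [Fintype.card_fin, hn] at this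
    exact_mod_cast this
  have hlow : 2 * (n : ℝ) - 2 * t - 1 ≤ ∑ i, (G.degree (f i) : ℝ) :=
    calc 2 * (n : ℝ) - 2 * t - 1 = ∑ _i : Fin (t + 1), (2 * (n : ℝ) - 2 * t - 1) / (t + 1) := by
          simp only [Finset.sum_const, Finset.card_univ, Fintype.card_fin, nsmul_eq_mul]
          push_cast
          field_simp
      _ ≤ ∑ i, (G.degree (f i) : ℝ) := Finset.sum_le_sum fun i _ => hdeg (f i)
  linarith

/-- In a 2-coloured graph on `n` vertices with minimum degree at least
    `(2n-2t-1)/(t+1)`, among any `t+1` vertices some two lie in a common red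
    component or in a common blue component. -/
theorem no_large_independent_component_system {V : Type} [Fintype V]
    (G : SimpleGraph V) [DecidableRel G.Adj] (c : Sym2 V → Fin 2)
    (t n : ℕ) (ht : 1 ≤ t) (hn : Fintype.card V = n)
    (hdeg : ∀ v : V, (2 * (n : ℝ) - 2 * t - 1) / (t + 1) ≤ G.degree v) :
    ∀ f : Fin (t + 1) → V, ∃ i j : Fin (t + 1), i ≠ j ∧
      ((colSub G c 0).connectedComponentMk (f i) =
          (colSub G c 0).connectedComponentMk (f j) ∨
        (colSub G c 1).connectedComponentMk (f i) =
          (colSub G c 1).connectedComponentMk (f j)) :=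
  no_large_independent_component_system_general G c t n hn hdeg
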